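/- Let (K,ε,ν) be a weakening and contraction comonad on a fibration p : E → B. Then the composite p ∘ U^K : Coalg(K) → B is a fibration, where U^K is the forgetful functor from the category of K-coalgebras. -/

import Mathlib

open CategoryTheory

/-- An arrow `f : X ⟶ Y` in `E` is `p`-cartesian if every `g : Z ⟶ Y` whose image factors
through `p f` lifts uniquely. -/
def IsCartesian {E B : Type*} [Category E] [Category B] (p : E ⥤ B)
    {X Y : E} (f : X ⟶ Y) : Prop :=
  ∀ ⦃Z : E⦄ (g : Z ⟶ Y) (h : p.obj Z ⟶ p.obj X),
    h ≫ p.map f = p.map g → ∃! l : Z ⟶ X, p.map l = h ∧ l ≫ f = g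

/-- A functor `p : E ⥤ B` is a (Grothendieck) fibration if every arrow into the image of an
object of `E` has a cartesian lift. -/
def IsFibration {E B : Type*} [Category E] [Category B] (p : E ⥤ B) : Prop :=
  ∀ (Y : E) (X : B) (φ : X ⟶ p.obj Y),
    ∃ (Z : E) (f : Z ⟶ Y) (e : p.obj Z = X),
      IsCartesian p f ∧ p.map f = eqToHom e ≫ φ

/-!
Since `ε` is `p`-cartesian and `p` maps the `ε`-naturality square at a cartesian arrow
`f : A ⟶ A'` to a pullback, that square is already a pullback in `E`. Given a coalgebra
`(Y, a)` and a cartesian lift `f : Z ⟶ Y` of an arrow of `B`, the pair `(𝟙 Z, f ≫ a)` therefore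
induces a counital `a' : Z ⟶ K Z` with `a' ≫ K f = f ≫ a`. The pullback square at `ε_Z` makes
every counital map coassociative, and the square at `f` shows that a map factoring a coalgebra
morphism through `f` is itself a coalgebra morphism, so `f` stays cartesian in `Coalg(K)`.
-/

theorem IsCartesian.hom_ext {E B : Type*} [Category E] [Category B] {p : E ⥤ B} {X Y : E}
    {f : X ⟶ Y} (hf : IsCartesian p f) {Z : E} {u v : Z ⟶ X} (hpu : p.map u = p.map v)
    (huv : u ≫ f = v ≫ f) : u = v := by
  obtain ⟨l, -, hl⟩ := hf (u ≫ f) (p.map u) (p.map_comp u f).symm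
  exact (hl u ⟨rfl, rfl⟩).trans (hl v ⟨hpu.symm, huv.symm⟩).symm

namespace CategoryTheory.Comonad

variable {E B : Type*} [Category E] [Category B] {K : Comonad E}

theorem isPullback_counit_naturality {p : E ⥤ B} {A A' : E} {f : A ⟶ A'}
    (hA : IsCartesian p (K.ε.app A)) (hA' : IsCartesian p (K.ε.app A'))
    (hpb : IsPullback (p.map (K.ε.app A)) (p.map (K.map f)) (p.map f) (p.map (K.ε.app A'))) :
    IsPullback (K.ε.app A) (K.map f) f (K.ε.app A') := by
  have hext {X : E} {u v : X ⟶ K.obj A} (h₁ : u ≫ K.ε.app A = v ≫ K.ε.app A)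
      (h₂ : u ≫ K.map f = v ≫ K.map f) : u = v :=
    hA.hom_ext (hpb.hom_ext (by simp only [← p.map_comp, h₁]) (by simp only [← p.map_comp, h₂])) h₁
  have hlift {X : E} (u : X ⟶ A) (v : X ⟶ K.obj A') (huv : u ≫ f = v ≫ K.ε.app A') :
      ∃ w : X ⟶ K.obj A, w ≫ K.ε.app A = u ∧ w ≫ K.map f = v := by
    obtain ⟨w, ⟨hwp, hwε⟩, -⟩ := hA u (hpb.lift (p.map u) (p.map v)
      (by simp only [← p.map_comp, huv])) (hpb.lift_fst _ _ _)
    refine ⟨w, hwε, hA'.hom_ext ?_ ?_⟩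
    · rw [p.map_comp, hwp, hpb.lift_snd]
    · rw [Category.assoc, counit_naturality, reassoc_of% hwε, huv]
  choose w hw₁ hw₂ using
    fun s : Limits.PullbackCone f (K.ε.app A') => hlift s.fst s.snd s.condition
  exact IsPullback.of_isLimit' ⟨(counit_naturality _ K f).symm⟩
    (Limits.PullbackCone.IsLimit.mk _ w hw₁ hw₂
      fun s _ h₁ h₂ => hext (h₁.trans (hw₁ s).symm) (h₂.trans (hw₂ s).symm))

theorem coassoc_of_counit {Z : E} {a : Z ⟶ K.obj Z} (ha : a ≫ K.ε.app Z = 𝟙 Z)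
    (hZ : IsPullback (K.ε.app (K.obj Z)) (K.map (K.ε.app Z)) (K.ε.app Z) (K.ε.app Z)) :
    a ≫ K.δ.app Z = a ≫ K.map a :=
  hZ.hom_ext (by simp [reassoc_of% ha]) (by simp [← K.map_comp, ha])

namespace Coalgebra

noncomputable def reindex (Y : Coalgebra K) {Z : E} (f : Z ⟶ Y.A)
    (hf : IsPullback (K.ε.app Z) (K.map f) f (K.ε.app Y.A))
    (hZ : IsPullback (K.ε.app (K.obj Z)) (K.map (K.ε.app Z)) (K.ε.app Z) (K.ε.app Z)) :
    Coalgebra K where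
  A := Z
  a := hf.lift (𝟙 Z) (f ≫ Y.a) (by simp [Y.counit])
  counit := hf.lift_fst _ _ _
  coassoc := coassoc_of_counit (hf.lift_fst _ _ _) hZ

noncomputable def reindexHom (Y : Coalgebra K) {Z : E} (f : Z ⟶ Y.A)
    (hf : IsPullback (K.ε.app Z) (K.map f) f (K.ε.app Y.A))
    (hZ : IsPullback (K.ε.app (K.obj Z)) (K.map (K.ε.app Z)) (K.ε.app Z) (K.ε.app Z)) :
    reindex Y f hf hZ ⟶ Y where
  f := f
  h := hf.lift_snd _ _ _

def Hom.factor {W Z Y : Coalgebra K} (f : Z ⟶ Y)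
    (hf : IsPullback (K.ε.app Z.A) (K.map f.f) f.f (K.ε.app Y.A))
    (g : W ⟶ Y) (l : W.A ⟶ Z.A) (hl : l ≫ f.f = g.f) : W ⟶ Z where
  f := l
  h := hf.hom_ext (by simp [reassoc_of% W.counit, Z.counit])
    (by simp [← K.map_comp, hl, reassoc_of% hl])

theorem Hom.isCartesian_forget_comp {p : E ⥤ B} {Z Y : Coalgebra K} (f : Z ⟶ Y)
    (hf : IsCartesian p f.f) (hpb : IsPullback (K.ε.app Z.A) (K.map f.f) f.f (K.ε.app Y.A)) :
    IsCartesian (K.forget ⋙ p) f := by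
  intro W g h hcomm
  obtain ⟨l, ⟨hlp, hlf⟩, hl⟩ := hf g.f h hcomm
  exact ⟨Hom.factor f hpb g l hlf, ⟨hlp, Hom.ext hlf⟩,
    fun l' ⟨hp', hf'⟩ => Hom.ext (hl l'.f ⟨hp', congrArg Hom.f hf'⟩)⟩

end Coalgebra

end CategoryTheory.Comonad

/-- for a weakening and contraction comonad `(K, ε, ν)` on a fibration
`p : E ⥤ B`, the composite `p ∘ U^K : Coalg(K) ⥤ B` of `p` with the forgetful functor from the
Eilenberg–Moore category of coalgebras is a fibration. -/
theorem wccmd_coalgebras_fibration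
    {E B : Type*} [Category E] [Category B] (p : E ⥤ B) (hp : IsFibration p)
    (K : Comonad E)
    (hε : ∀ A : E, IsCartesian p (K.ε.app A))
    (hpb : ∀ {A A' : E} (f : A ⟶ A'), IsCartesian p f →
      IsPullback (p.map (K.ε.app A)) (p.map ((K : E ⥤ E).map f)) (p.map f)
        (p.map (K.ε.app A'))) :
    IsFibration (K.forget ⋙ p) := by
  have hE {A A' : E} {f : A ⟶ A'} (hf : IsCartesian p f) :
      IsPullback (K.ε.app A) (K.map f) f (K.ε.app A') :=
    Comonad.isPullback_counit_naturality (hε A) (hε A') (hpb f hf)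
  intro Y X φ
  obtain ⟨Z, f, rfl, hf, hφ⟩ := hp Y.A X φ
  let f' := Comonad.Coalgebra.reindexHom Y f (hE hf) (hE (hε Z))
  exact ⟨_, f', rfl, f'.isCartesian_forget_comp hf (hE hf), hφ⟩
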